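/- Let S ∈ ℝ^{N×s} be the snapshot matrix whose columns are u₁, …, u_s ∈ ℝ^N, and let σ₁ ≥ σ₂ ≥ … ≥ σ_{min(N,s)} ≥ 0 be its singular values (the nonnegative square roots of the eigenvalues of SᵀS, sorted in decreasing order). Then for every linear subspace W ⊆ ℝ^N of dimension at most n, the sum of the squared Euclidean distances of the snapshots to their orthogonal projections onto W satisfies Σ_{i=1}^{s} ‖u_i − P_W u_i‖₂² ≥ Σ_{k=n+1}^{min(N,s)} σ_k², where P_W denotes the orthogonal projection onto W. -/

import Mathlib

/-! Let `v_k` be an orthonormal eigenbasis of `SᵀS` with eigenvalues `μ_k`. The vectors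
`c_k = S v_k` are pairwise orthogonal with `‖c_k‖² = μ_k`. The projection error
`∑ᵢ ‖(1 - P_W) S eᵢ‖²` is the squared Hilbert–Schmidt norm of `(1 - P_W) S`, so it may be computed
in the basis `v_k` instead: it equals `∑_k (μ_k - ‖P_W c_k‖²)`. Writing `‖P_W c_k‖² = μ_k t_k`
with `t_k ∈ [0, 1]`, Bessel's inequality gives `∑_k t_k ≤ dim W ≤ n`; since
`min (μ, λ) - λ t ≤ μ (1 - t)`, for every `λ ≥ 0` the error is at least
`∑_k min (μ_k, λ) - λ n`. The nonzero `μ_k` are the `σ_k²`, and for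
`λ = σ_{n+1}²` this lower bound is `∑_{k > n} σ_k²`. -/

open Polynomial Finset
open scoped InnerProductSpace Matrix

section InnerProductSpace

variable {𝕜 E F ι κ : Type*} [RCLike 𝕜]
  [NormedAddCommGroup E] [InnerProductSpace 𝕜 E] [NormedAddCommGroup F] [InnerProductSpace 𝕜 F]
  [Fintype ι] [Fintype κ]

theorem OrthonormalBasis.sum_norm_sq_apply_eq_sum_norm_sq_adjoint
    [FiniteDimensional 𝕜 E] [FiniteDimensional 𝕜 F] (T : E →ₗ[𝕜] F)
    (v : OrthonormalBasis ι 𝕜 E) (b : OrthonormalBasis κ 𝕜 F) :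
    ∑ i, ‖T (v i)‖ ^ 2 = ∑ j, ‖T.adjoint (b j)‖ ^ 2 := by
  simp_rw [← b.sum_sq_norm_inner_right (T _), ← T.adjoint_inner_left,
    ← v.sum_sq_norm_inner_left (T.adjoint _)]
  exact Finset.sum_comm

theorem OrthonormalBasis.sum_norm_sq_apply_eq [FiniteDimensional 𝕜 F] (T : E →ₗ[𝕜] F)
    (v : OrthonormalBasis ι 𝕜 E) (w : OrthonormalBasis κ 𝕜 E) :
    ∑ i, ‖T (v i)‖ ^ 2 = ∑ k, ‖T (w k)‖ ^ 2 := by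
  have : FiniteDimensional 𝕜 E := v.toBasis.finiteDimensional_of_finite
  rw [v.sum_norm_sq_apply_eq_sum_norm_sq_adjoint T (stdOrthonormalBasis 𝕜 F),
    w.sum_norm_sq_apply_eq_sum_norm_sq_adjoint T (stdOrthonormalBasis 𝕜 F)]

theorem Submodule.norm_sq_starProjection_eq_sum (W : Submodule 𝕜 E) [FiniteDimensional 𝕜 W]
    (b : OrthonormalBasis κ 𝕜 W) (x : E) :
    ‖W.starProjection x‖ ^ 2 = ∑ j, ‖⟪x, (b j : E)⟫_𝕜‖ ^ 2 := by
  rw [W.starProjection_apply, Submodule.norm_coe, ← b.sum_sq_norm_inner_left]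
  simp_rw [← Submodule.inner_orthogonalProjectionOnto_eq_of_mem_right]

theorem Orthonormal.sum_norm_sq_starProjection_le_finrank {y : ι → E} (hy : Orthonormal 𝕜 y)
    (W : Submodule 𝕜 E) [FiniteDimensional 𝕜 W] :
    ∑ k, ‖W.starProjection (y k)‖ ^ 2 ≤ Module.finrank 𝕜 W := by
  let b := stdOrthonormalBasis 𝕜 W
  calc ∑ k, ‖W.starProjection (y k)‖ ^ 2 = ∑ j, ∑ k, ‖⟪y k, (b j : E)⟫_𝕜‖ ^ 2 := by
        simp_rw [W.norm_sq_starProjection_eq_sum b]; exact Finset.sum_comm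
    _ ≤ ∑ j, ‖(b j : E)‖ ^ 2 :=
        Finset.sum_le_sum fun j _ => hy.sum_inner_products_le (x := (b j : E))
    _ = Module.finrank 𝕜 W := by simp [Submodule.norm_coe, b.norm_eq_one]

-- The terms with `c k = 0` are `0 / 0 = 0`.
theorem sum_norm_sq_starProjection_div_le_finrank {c : ι → E}
    (hc : Pairwise fun j k => ⟪c j, c k⟫_𝕜 = 0) (W : Submodule 𝕜 E) [FiniteDimensional 𝕜 W] :
    ∑ k, ‖W.starProjection (c k)‖ ^ 2 / ‖c k‖ ^ 2 ≤ Module.finrank 𝕜 W := by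
  classical
  let y : {k // c k ≠ 0} → E := fun k => (‖c k‖⁻¹ : 𝕜) • c k
  have hy : Orthonormal 𝕜 y := by
    refine ⟨fun k => ?_, fun j k hjk => ?_⟩
    · simp [y, norm_smul, inv_mul_cancel₀ (norm_ne_zero_iff.mpr k.2)]
    · simp [y, inner_smul_left, inner_smul_right, hc (Subtype.coe_ne_coe.mpr hjk)]
  calc ∑ k, ‖W.starProjection (c k)‖ ^ 2 / ‖c k‖ ^ 2
      = ∑ k : {k // c k ≠ 0}, ‖W.starProjection (y k)‖ ^ 2 := by
        rw [← Finset.sum_filter_of_ne (p := fun k => c k ≠ 0) (fun k _ h hk => by simp [hk] at h),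
          Finset.sum_subtype (p := fun k => c k ≠ 0) _ (fun k => by simp)]
        refine Finset.sum_congr rfl fun k _ => ?_
        simp [y, map_smul, norm_smul, div_eq_inv_mul, mul_pow]
    _ ≤ Module.finrank 𝕜 W := hy.sum_norm_sq_starProjection_le_finrank W

theorem min_sub_mul_div_le_sub {a p l : ℝ} (hp : 0 ≤ p) (hpa : p ≤ a) (hl : 0 ≤ l) :
    min a l - l * (p / a) ≤ a - p := by
  rcases (hp.trans hpa).eq_or_lt with rfl | ha
  · simp [le_antisymm hpa hp, hl]
  obtain ⟨t, rfl⟩ : ∃ t, p = a * t := ⟨p / a, by field_simp⟩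
  have ht : 0 ≤ t := nonneg_of_mul_nonneg_right hp ha
  have ht1 : t ≤ 1 := by nlinarith
  rw [mul_div_cancel_left₀ t ha.ne']
  rcases le_total a l with h | h
  · rw [min_eq_left h]; nlinarith
  · rw [min_eq_right h]; nlinarith

theorem sum_min_sub_le_sum_norm_sub_starProjection_sq {c : ι → E}
    (hc : Pairwise fun j k => ⟪c j, c k⟫_𝕜 = 0) {W : Submodule 𝕜 E} [FiniteDimensional 𝕜 W]
    {n : ℕ} (hW : Module.finrank 𝕜 W ≤ n) {l : ℝ} (hl : 0 ≤ l) :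
    ∑ k, min (‖c k‖ ^ 2) l - l * n ≤ ∑ k, ‖c k - W.starProjection (c k)‖ ^ 2 := by
  have hpyth : ∀ x, ‖x - W.starProjection x‖ ^ 2 = ‖x‖ ^ 2 - ‖W.starProjection x‖ ^ 2 := by
    intro x
    have := W.norm_sq_eq_add_norm_sq_starProjection x
    rw [Submodule.starProjection_orthogonal_val] at this
    linarith
  have hsum := (sum_norm_sq_starProjection_div_le_finrank hc W).trans (Nat.cast_le.mpr hW)
  calc ∑ k, min (‖c k‖ ^ 2) l - l * n
      ≤ ∑ k, min (‖c k‖ ^ 2) l - l * ∑ k, ‖W.starProjection (c k)‖ ^ 2 / ‖c k‖ ^ 2 := by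
        gcongr
    _ = ∑ k, (min (‖c k‖ ^ 2) l - l * (‖W.starProjection (c k)‖ ^ 2 / ‖c k‖ ^ 2)) := by
        rw [Finset.sum_sub_distrib, Finset.mul_sum]
    _ ≤ ∑ k, (‖c k‖ ^ 2 - ‖W.starProjection (c k)‖ ^ 2) :=
        Finset.sum_le_sum fun k _ => min_sub_mul_div_le_sub (sq_nonneg _)
          (pow_le_pow_left₀ (norm_nonneg _) (W.norm_starProjection_apply_le _) 2) hl
    _ = ∑ k, ‖c k - W.starProjection (c k)‖ ^ 2 := by simp only [hpyth]

theorem Matrix.inner_toEuclideanLin_eigenvectorBasis {m n : Type*} [Fintype m] [Fintype n]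
    [DecidableEq m] [DecidableEq n] (S : Matrix m n 𝕜) (hA : (Sᴴ * S).IsHermitian) (j k : n) :
    ⟪S.toEuclideanLin (hA.eigenvectorBasis j), S.toEuclideanLin (hA.eigenvectorBasis k)⟫_𝕜 =
      if j = k then (hA.eigenvalues k : 𝕜) else 0 := by
  rw [← LinearMap.adjoint_inner_right, ← Matrix.toEuclideanLin_conjTranspose_eq_adjoint,
    ← LinearMap.comp_apply, ← Matrix.toLpLin_mul_same, Matrix.toLpLin_apply,
    hA.mulVec_eigenvectorBasis, WithLp.toLp_smul, WithLp.toLp_ofLp,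
    RCLike.real_smul_eq_coe_smul (K := 𝕜), inner_smul_right,
    orthonormal_iff_ite.mp hA.eigenvectorBasis.orthonormal]
  split_ifs <;> simp

end InnerProductSpace

theorem sum_eq_sum_of_prod_X_sub_C_eq_mul_X_pow {R M ι κ : Type*} [CommRing R] [IsDomain R]
    [AddCommMonoid M] [Fintype ι] [Fintype κ] {μ : ι → R} {a : κ → R} {r : ℕ}
    (h : ∏ i, (X - C (μ i)) = (∏ k, (X - C (a k))) * X ^ r) {f : R → M} (hf : f 0 = 0) :
    ∑ i, f (μ i) = ∑ k, f (a k) := by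
  have hμ : ∏ i, (X - C (μ i)) = ((univ.val.map μ).map fun x => X - C x).prod := by
    rw [Multiset.map_map]; rfl
  have ha : ∏ k, (X - C (a k)) = ((univ.val.map a).map fun x => X - C x).prod := by
    rw [Multiset.map_map]; rfl
  have hX : (X : R[X]) ^ r = ((Multiset.replicate r (0 : R)).map fun x => X - C x).prod := by
    simp
  rw [hμ, ha, hX, ← Multiset.prod_add, ← Multiset.map_add] at h
  have hroots := congrArg Polynomial.roots h
  simp only [roots_multiset_prod_X_sub_C] at hroots
  have := congrArg (fun m => (m.map f).sum) hroots
  rwa [Multiset.map_add, Multiset.sum_add, Multiset.map_replicate, hf, Multiset.sum_replicate,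
    smul_zero, add_zero, Multiset.map_map, Multiset.map_map] at this

theorem Fin.sum_min_apply_of_antitone {M : Type*} [AddCommMonoid M] [LinearOrder M] {m : ℕ}
    {f : Fin m → M} (hf : Antitone f) {n : ℕ} (hn : n < m) :
    ∑ k, min (f k) (f ⟨n, hn⟩) =
      n • f ⟨n, hn⟩ + ∑ k ∈ univ.filter (fun k : Fin m => n ≤ (k : ℕ)), f k := by
  rw [← Finset.sum_filter_not_add_sum_filter univ (fun k : Fin m => n ≤ (k : ℕ))]
  congr 1
  · rw [Finset.sum_congr rfl fun k hk => min_eq_right (hf (Fin.le_def.mpr ?_)),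
      Finset.sum_const]
    · simp_rw [not_le]
      rw [Fin.card_filter_val_lt, min_eq_right hn.le]
    · exact (not_le.mp (Finset.mem_filter.mp hk).2).le
  · exact Finset.sum_congr rfl fun k hk =>
      min_eq_left (hf (Fin.le_def.mpr (Finset.mem_filter.mp hk).2))

open Polynomial in
/-- POD lower bound. Let `S` be the snapshot matrix with columns
`u 1, …, u s` and let `σ 1 ≥ … ≥ σ (min N s) ≥ 0` be its singular values (the
nonnegative square roots of the eigenvalues of `SᵀS` in decreasing order, encoded via
the characteristic polynomial of `SᵀS`). Then for every subspace `W` of dimension at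
most `n`, the total squared projection error of the snapshots onto `W` is at least
`Σ_{k=n+1}^{min(N,s)} σ_k²`. -/
theorem pod_projection_error_lower_bound
    (N s n : ℕ) (u : Fin s → EuclideanSpace ℝ (Fin N))
    (S : Matrix (Fin N) (Fin s) ℝ) (hS : ∀ i j, S i j = u j i)
    (σ : Fin (min N s) → ℝ) (hσnonneg : ∀ k, 0 ≤ σ k) (hσdec : Antitone σ)
    (hσ : (S.transpose * S).charpoly =
      (∏ k : Fin (min N s), (X - C (σ k ^ 2))) * X ^ (s - min N s)) :
    ∀ W : Submodule ℝ (EuclideanSpace ℝ (Fin N)), Module.finrank ℝ W ≤ n →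
      ∑ k ∈ Finset.univ.filter (fun k : Fin (min N s) => n ≤ (k : ℕ)), σ k ^ 2 ≤
        ∑ i : Fin s,
          ‖u i - (Submodule.orthogonalProjection W (u i) : EuclideanSpace ℝ (Fin N))‖ ^ 2 := by
  intro W hW
  rcases le_or_gt (min N s) n with hn | hn
  · rw [Finset.filter_false_of_mem fun k _ => not_le.mpr (k.isLt.trans_le hn), Finset.sum_empty]
    positivity
  have hA : (Sᴴ * S).IsHermitian := Matrix.isHermitian_conjTranspose_mul_self S
  rw [← Matrix.conjTranspose_eq_transpose_of_trivial, hA.charpoly_eq] at hσ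
  simp only [RCLike.ofReal_real_eq_id, id] at hσ
  let c k := S.toEuclideanLin (hA.eigenvectorBasis k)
  have hc : Pairwise fun j k => ⟪c j, c k⟫_ℝ = 0 := fun j k hjk => by
    simpa [c, hjk] using S.inner_toEuclideanLin_eigenvectorBasis hA j k
  have hnorm : ∀ k, ‖c k‖ ^ 2 = hA.eigenvalues k := fun k => by
    simpa [c, real_inner_self_eq_norm_sq] using S.inner_toEuclideanLin_eigenvectorBasis hA k k
  have hu : ∀ i, S.toEuclideanLin (EuclideanSpace.single i 1) = u i := fun i => by
    ext j; simp [hS]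
  have hσsq : Antitone fun k => σ k ^ 2 := fun j k hjk =>
    pow_le_pow_left₀ (hσnonneg k) (hσdec hjk) 2
  set l := σ ⟨n, hn⟩ ^ 2
  calc ∑ k ∈ Finset.univ.filter (fun k : Fin (min N s) => n ≤ (k : ℕ)), σ k ^ 2
      = ∑ k, min (σ k ^ 2) l - l * n := by
        rw [Fin.sum_min_apply_of_antitone hσsq hn, nsmul_eq_mul]; ring
    _ = ∑ k, min (‖c k‖ ^ 2) l - l * n := by
        simp_rw [hnorm]
        rw [sum_eq_sum_of_prod_X_sub_C_eq_mul_X_pow hσ (f := fun x => min x l)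
          (min_eq_left (sq_nonneg _))]
    _ ≤ ∑ k, ‖c k - W.starProjection (c k)‖ ^ 2 :=
        sum_min_sub_le_sum_norm_sub_starProjection_sq hc hW (sq_nonneg _)
    _ = ∑ i, ‖u i - W.starProjection (u i)‖ ^ 2 := by
        simpa [c, hu] using OrthonormalBasis.sum_norm_sq_apply_eq
          (Wᗮ.starProjection.toLinearMap ∘ₗ S.toEuclideanLin) hA.eigenvectorBasis
          (EuclideanSpace.basisFun (Fin s) ℝ)
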